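/- arXiv:1912.09758 — 6 statements merged into one kernel-verified Lean document; each statement's English description precedes it below -/
import Mathlib

section
/- For the function s(c,x) = ((1+x)/2)·log₂((1+x)/(1+cx)) + ((1-x)/2)·log₂((1-x)/(1-cx)), defined for |c| < 1 and |x| ≤ 1, the partial derivative with respect to c is nonpositive; hence s(c,x) is nonincreasing in c for each fixed x. -/
/-!
Where both `1 ± c x` are nonzero, `s(·, x)` is a constant minus
`((1 + x) log (1 + c x) + (1 - x) log (1 - c x)) / (2 log 2)`, whose derivative in `c` simplifies
to `x² (c - 1) / (log 2 · (1 - c² x²))`. For `|c| < 1` and `|x| ≤ 1` this is `≤ 0`, and the mean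
value theorem on `(-1, 1)` gives antitonicity.
-/

open Real

/-- The relative-entropy function s(c,x) for spin-1/2 noisy approximations
(base-2 logarithm, Lean's convention `logb 2 0 = 0` covers `0 · log 0 = 0`). -/
noncomputable def sFun (c x : ℝ) : ℝ :=
  (1 + x) / 2 * Real.logb 2 ((1 + x) / (1 + c * x))
    + (1 - x) / 2 * Real.logb 2 ((1 - x) / (1 - c * x))

lemma abs_mul_lt_one_of_abs_lt_one_of_abs_le_one {c x : ℝ} (hc : |c| < 1) (hx : |x| ≤ 1) :
    |c * x| < 1 := by
  rw [abs_mul]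
  nlinarith [abs_nonneg c, abs_nonneg x]

lemma mul_logb_div {b a v : ℝ} (hv : v ≠ 0) :
    a * logb b (a / v) = a * (logb b a - logb b v) := by
  rcases eq_or_ne a 0 with rfl | ha
  · simp
  · rw [logb_div ha hv]

lemma sFun_eq_sub (c x : ℝ) (hp : 1 + c * x ≠ 0) (hm : 1 - c * x ≠ 0) :
    sFun c x = ((1 + x) * logb 2 (1 + x) + (1 - x) * logb 2 (1 - x)) / 2
      - ((1 + x) * log (1 + c * x) + (1 - x) * log (1 - c * x)) / (2 * log 2) := by
  have h₁ := mul_logb_div (b := 2) (a := 1 + x) hp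
  have h₂ := mul_logb_div (b := 2) (a := 1 - x) hm
  rw [sFun, div_mul_eq_mul_div, div_mul_eq_mul_div, h₁, h₂]
  simp only [logb]
  field_simp
  ring

lemma hasDerivAt_sFun {c x : ℝ} (hp : 1 + c * x ≠ 0) (hm : 1 - c * x ≠ 0) :
    HasDerivAt (sFun · x) (x ^ 2 * (c - 1) / (log 2 * ((1 + c * x) * (1 - c * x)))) c := by
  have hcontp : ContinuousAt (fun c' : ℝ => 1 + c' * x) c := by fun_prop
  have hcontm : ContinuousAt (fun c' : ℝ => 1 - c' * x) c := by fun_prop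
  have hev : (sFun · x) =ᶠ[nhds c] fun c' =>
      ((1 + x) * logb 2 (1 + x) + (1 - x) * logb 2 (1 - x)) / 2
        - ((1 + x) * log (1 + c' * x) + (1 - x) * log (1 - c' * x)) / (2 * log 2) := by
    filter_upwards [hcontp.eventually_ne hp, hcontm.eventually_ne hm] with c' hp' hm'
    exact sFun_eq_sub c' x hp' hm'
  have hlogp : HasDerivAt (fun c' => log (1 + c' * x)) (x / (1 + c * x)) c := by
    simpa using (((hasDerivAt_id c).mul_const x).const_add 1).log hp
  have hlogm : HasDerivAt (fun c' => log (1 - c' * x)) (-x / (1 - c * x)) c := by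
    simpa using (((hasDerivAt_id c).mul_const x).const_sub 1).log hm
  refine (((hlogp.const_mul (1 + x)).add (hlogm.const_mul (1 - x))).div_const (2 * log 2)
    |>.const_sub _).congr_of_eventuallyEq hev |>.congr_deriv ?_
  have hlog2 : log 2 ≠ 0 := (log_pos one_lt_two).ne'
  rw [mul_comm c x] at hp hm
  field_simp
  ring

/-- For `|c| < 1` and `|x| ≤ 1`, the partial derivative of `s(c,x)` with respect to `c`
is nonpositive; hence `s(c,x)` is nonincreasing in `c` for each fixed `x`. -/
theorem sFun_deriv_nonpos_and_antitone (x : ℝ) (hx : |x| ≤ 1) :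
    (∀ c : ℝ, |c| < 1 → deriv (fun c => sFun c x) c ≤ 0) ∧
    (∀ c₁ c₂ : ℝ, |c₁| < 1 → |c₂| < 1 → c₁ ≤ c₂ → sFun c₂ x ≤ sFun c₁ x) := by
  set f' : ℝ → ℝ := fun c => x ^ 2 * (c - 1) / (log 2 * ((1 + c * x) * (1 - c * x)))
  have hderiv : ∀ c, |c| < 1 → HasDerivAt (sFun · x) (f' c) c ∧ f' c ≤ 0 := by
    intro c hc
    obtain ⟨hcx₁, hcx₂⟩ := abs_lt.mp (abs_mul_lt_one_of_abs_lt_one_of_abs_le_one hc hx)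
    have hp : 0 < 1 + c * x := by linarith
    have hm : 0 < 1 - c * x := by linarith
    refine ⟨hasDerivAt_sFun hp.ne' hm.ne', div_nonpos_of_nonpos_of_nonneg ?_ (by positivity)⟩
    nlinarith [sq_nonneg x, (abs_lt.mp hc).2]
  have hIoo : ∀ c ∈ Set.Ioo (-1 : ℝ) 1, |c| < 1 := fun c hc => abs_lt.mpr hc
  have hanti : AntitoneOn (sFun · x) (Set.Ioo (-1) 1) := by
    refine antitoneOn_of_hasDerivWithinAt_nonpos (f' := f') (convex_Ioo _ _)
      (fun c hc => (hderiv c (hIoo c hc)).1.continuousAt.continuousWithinAt)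
      (fun c hc => ?_) (fun c hc => ?_) <;> rw [interior_Ioo] at hc
    · exact (hderiv c (hIoo c hc)).1.hasDerivWithinAt
    · exact (hderiv c (hIoo c hc)).2
  refine ⟨fun c hc => (hderiv c hc).1.deriv ▸ (hderiv c hc).2, ?_⟩
  intro c₁ c₂ h₁ h₂ hle
  exact hanti (abs_lt.mp h₁) (abs_lt.mp h₂) hle
end

section
/- The cubic equation a³ - a² - 5a + 7/3 = 0 has a unique real solution a₀ in the interval (0,1), and a₀ = (1 + 8·cos α)/3 where α ∈ (0, π/2) satisfies cos(3α - π) = 1/8. -/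
open Real Set

/-- The cubic `a³ - a² - 5a + 7/3 = 0` has a unique real solution `a₀` in `(0,1)`,
and `a₀ = (1 + 8 cos α)/3` for `α ∈ (0, π/2)` with `cos(3α - π) = 1/8`. -/
theorem cubic_unique_root_in_Ioo :
    (∃! a : ℝ, a ∈ Ioo (0 : ℝ) 1 ∧ a ^ 3 - a ^ 2 - 5 * a + 7 / 3 = 0) ∧
    (∀ a : ℝ, a ∈ Ioo (0 : ℝ) 1 → a ^ 3 - a ^ 2 - 5 * a + 7 / 3 = 0 →
      ∃ α ∈ Ioo (0 : ℝ) (Real.pi / 2),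
        Real.cos (3 * α - Real.pi) = 1 / 8 ∧ a = (1 + 8 * Real.cos α) / 3) := by
  constructor
  · -- existence via IVT on [0,1]
    have hf : ContinuousOn (fun a : ℝ => a ^ 3 - a ^ 2 - 5 * a + 7 / 3) (Icc 0 1) := by
      fun_prop
    have h01 : (0 : ℝ) ≤ 1 := by norm_num
    have := intermediate_value_Icc' h01 hf
    have h0 : (0 : ℝ) ∈ Icc ((fun a : ℝ => a ^ 3 - a ^ 2 - 5 * a + 7 / 3) 1)
        ((fun a : ℝ => a ^ 3 - a ^ 2 - 5 * a + 7 / 3) 0) := by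
      simp only [mem_Icc]; norm_num
    obtain ⟨a, ha, hfa⟩ := this h0
    refine ⟨a, ⟨⟨?_, ?_⟩, hfa⟩, ?_⟩
    · rcases lt_or_eq_of_le ha.1 with h | h
      · exact h
      · exfalso; rw [← h] at hfa; norm_num at hfa
    · rcases lt_or_eq_of_le ha.2 with h | h
      · exact h
      · exfalso; rw [h] at hfa; norm_num at hfa
    · rintro b ⟨⟨hb0, hb1⟩, hfb⟩
      have key : (b - a) * (b ^ 2 + b * a + a ^ 2 - b - a - 5) = 0 := by
        linear_combination hfb - hfa
      have hneg : b ^ 2 + b * a + a ^ 2 - b - a - 5 < 0 := by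
        nlinarith [ha.1, ha.2, sq_nonneg (b - a)]
      have : b - a = 0 := by
        rcases mul_eq_zero.mp key with h | h
        · exact h
        · exact absurd h (ne_of_lt hneg)
      linarith
  · rintro a ⟨ha0, ha1⟩ hfa
    have ha3 : 1 / 3 < a := by nlinarith [sq_nonneg a, sq_nonneg (a - 1/3)]
    set c : ℝ := (3 * a - 1) / 8 with hc
    have hc0 : 0 < c := by simp only [hc]; linarith
    have hc1 : c < 1 := by simp only [hc]; linarith
    refine ⟨Real.arccos c, ⟨?_, ?_⟩, ?_, ?_⟩
    · exact Real.arccos_pos.mpr hc1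
    · exact Real.arccos_lt_pi_div_two.mpr hc0
    · have hcc : Real.cos (Real.arccos c) = c := Real.cos_arccos (by linarith) (by linarith)
      rw [Real.cos_sub_pi, Real.cos_three_mul, hcc]
      simp only [hc]
      nlinarith [hfa]
    · have hcc : Real.cos (Real.arccos c) = c := Real.cos_arccos (by linarith) (by linarith)
      rw [hcc]; simp only [hc]; ring
end

section
/- The quartic equation a⁴ - 6a² - 8a + 15/2 = 0 has a unique real solution a₀ in (0,1); moreover, the function p(a) = (1/16)(15 - 4a - 6a² - 4a³ - a⁴) is strictly decreasing on (0,1) from 15/16 to 0, the function q(a) = (1/16)(12a + 6a² - 4a³ - 3a⁴) is strictly increasing on (0,1) from 0 to 11/16, and p(a₀) = q(a₀). -/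
open Real Set

/-- For spin 3/2: the quartic `a⁴ - 6a² - 8a + 15/2 = 0` has a unique real solution
`a₀ ∈ (0,1)`; moreover `p(a) = (15 - 4a - 6a² - 4a³ - a⁴)/16` is strictly decreasing
on `(0,1)` from `15/16` to `0`, `q(a) = (12a + 6a² - 4a³ - 3a⁴)/16` is strictly
increasing on `(0,1)` from `0` to `11/16`, and `p(a₀) = q(a₀)`. -/
theorem spin_three_halves_optimization :
    (∃! a₀ : ℝ, a₀ ∈ Ioo (0 : ℝ) 1 ∧ a₀ ^ 4 - 6 * a₀ ^ 2 - 8 * a₀ + 15 / 2 = 0) ∧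
    StrictAntiOn (fun a : ℝ => (15 - 4 * a - 6 * a ^ 2 - 4 * a ^ 3 - a ^ 4) / 16) (Ioo 0 1) ∧
    (fun a : ℝ => (15 - 4 * a - 6 * a ^ 2 - 4 * a ^ 3 - a ^ 4) / 16) 0 = 15 / 16 ∧
    (fun a : ℝ => (15 - 4 * a - 6 * a ^ 2 - 4 * a ^ 3 - a ^ 4) / 16) 1 = 0 ∧
    StrictMonoOn (fun a : ℝ => (12 * a + 6 * a ^ 2 - 4 * a ^ 3 - 3 * a ^ 4) / 16) (Ioo 0 1) ∧
    (fun a : ℝ => (12 * a + 6 * a ^ 2 - 4 * a ^ 3 - 3 * a ^ 4) / 16) 0 = 0 ∧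
    (fun a : ℝ => (12 * a + 6 * a ^ 2 - 4 * a ^ 3 - 3 * a ^ 4) / 16) 1 = 11 / 16 ∧
    (∀ a₀ : ℝ, a₀ ∈ Ioo (0 : ℝ) 1 → a₀ ^ 4 - 6 * a₀ ^ 2 - 8 * a₀ + 15 / 2 = 0 →
      (15 - 4 * a₀ - 6 * a₀ ^ 2 - 4 * a₀ ^ 3 - a₀ ^ 4) / 16 =
        (12 * a₀ + 6 * a₀ ^ 2 - 4 * a₀ ^ 3 - 3 * a₀ ^ 4) / 16) := by
  refine ⟨?_, ?_, by norm_num, by norm_num, ?_, by norm_num, by norm_num, ?_⟩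
  · -- existence and uniqueness
    have hcont : ContinuousOn (fun a : ℝ => a ^ 4 - 6 * a ^ 2 - 8 * a + 15 / 2) (Icc 0 1) := by
      fun_prop
    have key := intermediate_value_Ioo' (le_of_lt one_pos) hcont
    have h0 : (0 : ℝ) ∈ Ioo ((fun a : ℝ => a ^ 4 - 6 * a ^ 2 - 8 * a + 15 / 2) 1)
        ((fun a : ℝ => a ^ 4 - 6 * a ^ 2 - 8 * a + 15 / 2) 0) := by
      constructor <;> norm_num
    obtain ⟨a₀, ha₀, hfa₀⟩ := key h0
    simp only at hfa₀
    refine ⟨a₀, ⟨ha₀, hfa₀⟩, ?_⟩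
    rintro b ⟨⟨hb0, hb1⟩, hfb⟩
    obtain ⟨ha0, ha1⟩ := ha₀
    by_contra hne
    rcases lt_or_gt_of_ne hne with h | h
    · nlinarith [mul_pos (sub_pos.2 h) (mul_pos hb0 ha0), sq_nonneg (b + a₀),
        mul_pos (mul_pos (sub_pos.2 h) (sub_pos.2 hb1)) (sub_pos.2 ha1),
        mul_pos (sub_pos.2 h) (sub_pos.2 hb1), mul_pos (sub_pos.2 h) (sub_pos.2 ha1),
        mul_pos hb0 ha0]
    · nlinarith [mul_pos (sub_pos.2 h) (mul_pos hb0 ha0), sq_nonneg (b + a₀),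
        mul_pos (mul_pos (sub_pos.2 h) (sub_pos.2 hb1)) (sub_pos.2 ha1),
        mul_pos (sub_pos.2 h) (sub_pos.2 hb1), mul_pos (sub_pos.2 h) (sub_pos.2 ha1),
        mul_pos hb0 ha0]
  · rintro a ⟨ha0, ha1⟩ b ⟨hb0, hb1⟩ hab
    simp only
    have h2 : a ^ 2 < b ^ 2 := pow_lt_pow_left₀ hab ha0.le (by norm_num)
    have h3 : a ^ 3 < b ^ 3 := pow_lt_pow_left₀ hab ha0.le (by norm_num)
    have h4 : a ^ 4 < b ^ 4 := pow_lt_pow_left₀ hab ha0.le (by norm_num)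
    linarith
  · rintro a ⟨ha0, ha1⟩ b ⟨hb0, hb1⟩ hab
    simp only
    nlinarith [mul_pos (sub_pos.2 hab) (sub_pos.2 ha1), mul_pos (sub_pos.2 hab) (sub_pos.2 hb1),
      mul_pos (mul_pos (sub_pos.2 hab) (sub_pos.2 ha1)) (sub_pos.2 hb1),
      mul_pos (sub_pos.2 hab) (mul_pos ha0 hb0),
      mul_pos (mul_pos (sub_pos.2 hab) (sub_pos.2 ha1)) ha0,
      mul_pos (mul_pos (sub_pos.2 hab) (sub_pos.2 hb1)) hb0,
      mul_pos (mul_pos (mul_pos (sub_pos.2 hab) (sub_pos.2 ha1)) (sub_pos.2 hb1)) ha0]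
  · rintro a₀ ⟨h0, h1⟩ heq
    linarith
end

section
/- For the optimal-cloning approximation of r orthogonal spin components of a spin-s system (d = 2s+1), with p_m = A^ρ(m), the worst-case relative entropy sup over states ρ of S(A^ρ ‖ M^ρ) equals log₂(3(s+1)/(s+3)) when r = 3, where M^ρ(m) = (1+(s+2)p_m)/(3(s+1)), and equals log₂(2(s+1)/(s+2)) when r = 2, where M^ρ(m) = (1+(2s+3)p_m)/(4(s+1)); concretely, for any probability vector (p_m)_m over 2s+1 outcomes, Σ_m p_m · log₂(3(s+1)p_m/(1+(s+2)p_m)) ≤ log₂(3(s+1)/(s+3)), with equality attained when some p_m = 1. -/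
open Real Finset

lemma cloning_pt (C c x : ℝ) (hC : 0 < C) (hc : 0 ≤ c) (hx : 0 ≤ x) (hx1 : x ≤ 1) :
    x * Real.logb 2 (C * x / (1 + c * x)) ≤ x * Real.logb 2 (C / (1 + c)) := by
  rcases eq_or_lt_of_le hx with h | h
  · simp [← h]
  · have h1 : 0 < 1 + c * x := by nlinarith
    have h2 : 0 < 1 + c := by linarith
    have harg : 0 < C * x / (1 + c * x) := by positivity
    refine mul_le_mul_of_nonneg_left ?_ hx
    refine Real.logb_le_logb_of_le one_lt_two harg ?_
    rw [div_le_div_iff₀ h1 h2]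
    nlinarith

lemma cloning_eq (C c : ℝ) (hc : -1 < c) :
    (1 : ℝ) * Real.logb 2 (C * 1 / (1 + c * 1)) = Real.logb 2 (C / (1 + c)) := by
  norm_num

/-- Worst-case relative entropy for the optimal-cloning approximations of
orthogonal spin components of a spin-`s` system (`d = 2s+1` outcomes, `2s = n`).
For any probability vector `p` over the `2s+1` outcomes:
for `r = 3`, `∑_m p_m log₂(3(s+1)p_m/(1+(s+2)p_m)) ≤ log₂(3(s+1)/(s+3))`, and
for `r = 2`, `∑_m p_m log₂(4(s+1)p_m/(1+(2s+3)p_m)) ≤ log₂(2(s+1)/(s+2))`;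
both bounds are attained when some `p_{m₀} = 1`. -/
theorem optimal_cloning_information_loss (n : ℕ) (hn : 1 ≤ n) (s : ℝ)
    (hs : 2 * s = (n : ℝ)) (p : Fin (n + 1) → ℝ)
    (hp : ∀ m, 0 ≤ p m) (hsum : ∑ m, p m = 1) :
    (∑ m, p m * Real.logb 2 (3 * (s + 1) * p m / (1 + (s + 2) * p m))
        ≤ Real.logb 2 (3 * (s + 1) / (s + 3))) ∧
    (∑ m, p m * Real.logb 2 (4 * (s + 1) * p m / (1 + (2 * s + 3) * p m))
        ≤ Real.logb 2 (2 * (s + 1) / (s + 2))) ∧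
    (∀ m₀, p m₀ = 1 →
      (∑ m, p m * Real.logb 2 (3 * (s + 1) * p m / (1 + (s + 2) * p m))
          = Real.logb 2 (3 * (s + 1) / (s + 3))) ∧
      (∑ m, p m * Real.logb 2 (4 * (s + 1) * p m / (1 + (2 * s + 3) * p m))
          = Real.logb 2 (2 * (s + 1) / (s + 2)))) := by
  have hs0 : (0 : ℝ) < s := by
    have : (1 : ℝ) ≤ (n : ℝ) := by exact_mod_cast hn
    linarith
  have hple : ∀ m, p m ≤ 1 := by
    intro m
    calc p m ≤ ∑ m, p m := Finset.single_le_sum (fun i _ => hp i) (Finset.mem_univ m)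
    _ = 1 := hsum
  -- arithmetic identities for the denominators
  have e3 : 3 * (s + 1) / (1 + (s + 2)) = 3 * (s + 1) / (s + 3) := by ring_nf
  have e2 : 4 * (s + 1) / (1 + (2 * s + 3)) = 2 * (s + 1) / (s + 2) := by
    rw [div_eq_div_iff (by linarith) (by linarith)]; ring
  have key : ∀ (C c : ℝ), 0 < C → 0 ≤ c →
      ∑ m, p m * Real.logb 2 (C * p m / (1 + c * p m))
        ≤ Real.logb 2 (C / (1 + c)) := by
    intro C c hC hc
    calc ∑ m, p m * Real.logb 2 (C * p m / (1 + c * p m))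
        ≤ ∑ m, p m * Real.logb 2 (C / (1 + c)) :=
          Finset.sum_le_sum (fun m _ => cloning_pt C c (p m) hC hc (hp m) (hple m))
      _ = Real.logb 2 (C / (1 + c)) := by rw [← Finset.sum_mul, hsum, one_mul]
  have keyeq : ∀ (C c : ℝ), -1 < c → ∀ m₀, p m₀ = 1 →
      ∑ m, p m * Real.logb 2 (C * p m / (1 + c * p m))
        = Real.logb 2 (C / (1 + c)) := by
    intro C c hc m₀ hm₀
    have hz : ∀ m ∈ Finset.univ, m ≠ m₀ → p m * Real.logb 2 (C * p m / (1 + c * p m)) = 0 := by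
      intro m _ hm
      have hsub : ({m₀, m} : Finset (Fin (n+1))) ⊆ Finset.univ := Finset.subset_univ _
      have hle : p m₀ + p m ≤ ∑ m, p m := by
        have := Finset.sum_le_sum_of_subset_of_nonneg hsub (fun i _ _ => hp i)
        rwa [Finset.sum_pair (Ne.symm hm)] at this
      have : p m = 0 := by
        have := hp m; rw [hsum, hm₀] at hle; linarith
      simp [this]
    rw [Finset.sum_eq_single_of_mem m₀ (Finset.mem_univ m₀) hz, hm₀, cloning_eq C c hc]
  refine ⟨?_, ?_, ?_⟩
  · have := key (3 * (s + 1)) (s + 2) (by linarith) (by linarith)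
    rwa [e3] at this
  · have := key (4 * (s + 1)) (2 * s + 3) (by linarith) (by linarith)
    rwa [e2] at this
  · intro m₀ hm₀
    constructor
    · have := keyeq (3 * (s + 1)) (s + 2) (by linarith) m₀ hm₀
      rwa [e3] at this
    · have := keyeq (4 * (s + 1)) (2 * s + 3) (by linarith) m₀ hm₀
      rwa [e2] at this
end

section
/- The sequence of minimum information losses for all spin components satisfies the strict ordering log₂(4/3) < log₂(2/(a₁(3-a₁²))) < log₂(32/(45 - 24a₂ - 24a₂² - 8a₂³)), where a₁ ∈ (0,1) is the unique real root of a³ - a² - 5a + 7/3 = 0 and a₂ ∈ (0,1) is the unique real root in (0,1) of a⁴ - 6a² - 8a + 15/2 = 0. -/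
open Real Set

/-- Strict ordering of the minimum information losses for all spin components at
`s = 1/2, 1, 3/2`: `log₂(4/3) < log₂(2/(a₁(3-a₁²))) <
log₂(32/(45 - 24a₂ - 24a₂² - 8a₂³))`, where `a₁ ∈ (0,1)` is the root of
`a³ - a² - 5a + 7/3 = 0` and `a₂ ∈ (0,1)` is the root of
`a⁴ - 6a² - 8a + 15/2 = 0`. -/
theorem information_loss_strict_ordering (a₁ a₂ : ℝ)
    (ha₁ : a₁ ∈ Ioo (0 : ℝ) 1) (hroot₁ : a₁ ^ 3 - a₁ ^ 2 - 5 * a₁ + 7 / 3 = 0)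
    (ha₂ : a₂ ∈ Ioo (0 : ℝ) 1) (hroot₂ : a₂ ^ 4 - 6 * a₂ ^ 2 - 8 * a₂ + 15 / 2 = 0) :
    Real.logb 2 (4 / 3) < Real.logb 2 (2 / (a₁ * (3 - a₁ ^ 2))) ∧
    Real.logb 2 (2 / (a₁ * (3 - a₁ ^ 2))) <
      Real.logb 2 (32 / (45 - 24 * a₂ - 24 * a₂ ^ 2 - 8 * a₂ ^ 3)) := by
  obtain ⟨h10, h11⟩ := ha₁
  obtain ⟨h20, h21⟩ := ha₂
  have ha1l : 4 / 9 ≤ a₁ := by nlinarith [sq_nonneg (2 * a₁ - 1), sq_nonneg a₁]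
  have ha1u : a₁ < 9 / 20 := by
    nlinarith [sq_nonneg (a₁ - 9/20), mul_pos h10 h10, sq_nonneg a₁]
  have ha2l : 63 / 100 < a₂ := by
    nlinarith [sq_nonneg (a₂ - 63/100), mul_pos h20 h20, sq_nonneg a₂,
      mul_pos (mul_pos h20 h20) h20]
  have hX : 0 < a₁ * (3 - a₁ ^ 2) := by nlinarith
  have hD : 0 < 45 - 24 * a₂ - 24 * a₂ ^ 2 - 8 * a₂ ^ 3 := by nlinarith
  constructor
  · apply Real.logb_lt_logb one_lt_two (by norm_num)
    rw [lt_div_iff₀ hX]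
    nlinarith [sq_nonneg a₁]
  · apply Real.logb_lt_logb one_lt_two (div_pos two_pos hX)
    rw [div_lt_div_iff₀ hX hD]
    nlinarith [sq_nonneg a₁, sq_nonneg a₂]
end

section
/- For spin 3/2, the relative entropy between the uniform distribution on 4 outcomes and the distribution of the optimal approximate measurement on the maximally mixed state equals (1/2)·log₂(1/(4a₀(1-a₀))), where a₀ ∈ (0,1) is the root of a⁴ - 6a² - 8a + 15/2 = 0; in particular it is strictly positive since a₀ ≠ 1/2, showing the optimal measurement is biased. -/
open Real Set

/-- For spin 3/2: the relative entropy between the uniform distribution on 4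
outcomes and the distribution `((1-a₀)/2, a₀/2, a₀/2, (1-a₀)/2)` of the optimal
approximate measurement on the maximally mixed state equals
`(1/2) log₂(1/(4a₀(1-a₀)))`, where `a₀ ∈ (0,1)` is the root of
`a⁴ - 6a² - 8a + 15/2 = 0`; it is strictly positive since `a₀ ≠ 1/2`,
showing that the optimal measurement is biased. -/
theorem spin_three_halves_bias (a : ℝ) (ha : a ∈ Ioo (0 : ℝ) 1)
    (hroot : a ^ 4 - 6 * a ^ 2 - 8 * a + 15 / 2 = 0) :
    ((1/4 : ℝ) * Real.logb 2 ((1/4) / ((1 - a) / 2))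
      + (1/4 : ℝ) * Real.logb 2 ((1/4) / (a / 2))
      + (1/4 : ℝ) * Real.logb 2 ((1/4) / (a / 2))
      + (1/4 : ℝ) * Real.logb 2 ((1/4) / ((1 - a) / 2))
        = (1/2 : ℝ) * Real.logb 2 (1 / (4 * a * (1 - a)))) ∧
    a ≠ 1/2 ∧
    0 < (1/2 : ℝ) * Real.logb 2 (1 / (4 * a * (1 - a))) := by
  obtain ⟨ha0, ha1⟩ := ha
  have h1a : 0 < 1 - a := by linarith
  have hne : a ≠ 1/2 := by
    intro h; rw [h] at hroot; norm_num at hroot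
  have hx : (1/4 : ℝ) / ((1 - a) / 2) = 1 / (2 * (1 - a)) := by
    field_simp; ring
  have hy : (1/4 : ℝ) / (a / 2) = 1 / (2 * a) := by
    field_simp; ring
  have hmul : (1 : ℝ) / (2 * (1 - a)) * (1 / (2 * a)) = 1 / (4 * a * (1 - a)) := by
    field_simp; ring
  have hlog : Real.logb 2 (1 / (2 * (1 - a))) + Real.logb 2 (1 / (2 * a))
      = Real.logb 2 (1 / (4 * a * (1 - a))) := by
    rw [← Real.logb_mul (by positivity) (by positivity), hmul]
  refine ⟨?_, hne, ?_⟩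
  · rw [hx, hy]; linarith [hlog]
  · have hlt : 4 * a * (1 - a) < 1 := by nlinarith [pow_pos (show (0:ℝ) < |2*a-1| from abs_pos.mpr (by intro h; apply hne; linarith)) 2, sq_abs (2*a-1)]
    have : 1 < 1 / (4 * a * (1 - a)) := by
      rw [lt_div_iff₀ (by positivity)]; linarith
    have := Real.logb_pos (by norm_num : (1:ℝ) < 2) this
    linarith
end
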